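/- arXiv:0902.1505 — 3 statements merged into one kernel-verified Lean document; each statement's English description precedes it below -/
import Mathlib

section
/- For every integer N ≥ 1 and every vector (λ_1, …, λ_N) ∈ ℝ^N with λ_i ≥ 0 for all i and ∑_{i=1}^N λ_i = 1, one has ∏_{i=1}^N λ_i · ∏_{1≤i<j≤N} (λ_i + λ_j)^2 ≤ 2^{N²−N} · N^{−N²}, with equality if and only if λ_i = 1/N for all i. -/
/-!
With `mᵢⱼ = (λᵢ + λⱼ)/2` over all ordered pairs `(i, j)`, the diagonal contributes `∏ λᵢ` and every
unordered pair `i < j` is counted twice, so `h(λ) = 2^{N²-N} ∏ᵢⱼ mᵢⱼ`. The `N²` numbers `mᵢⱼ` sum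
to `N`, so by AM-GM their product is at most `N^{-N²}`, with equality iff every `mᵢⱼ` is `1/N`;
on the diagonal this says `λᵢ = 1/N`.
-/

open Finset

namespace Real

variable {ι : Type*} [Fintype ι] [Nonempty ι] {z : ι → ℝ} {a : ℝ}

lemma sum_inv_card_eq_one : ∑ _i : ι, (Fintype.card ι : ℝ)⁻¹ = 1 := by
  simp [Fintype.card_ne_zero]

lemma sum_inv_card_mul_eq_of_sum_eq (hsum : ∑ i, z i = Fintype.card ι * a) :
    ∑ i, (Fintype.card ι : ℝ)⁻¹ * z i = a := by
  rw [← mul_sum, hsum, inv_mul_cancel_left₀ (by simp [Fintype.card_ne_zero])]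

theorem prod_le_pow_card_of_sum_eq (hz : ∀ i, 0 ≤ z i) (hsum : ∑ i, z i = Fintype.card ι * a) :
    ∏ i, z i ≤ a ^ Fintype.card ι := by
  have amgm := geom_mean_le_arith_mean_weighted univ (fun _ => (Fintype.card ι : ℝ)⁻¹) z
    (fun _ _ => by positivity) sum_inv_card_eq_one (fun i _ => hz i)
  rw [finsetProd_rpow _ _ (fun i _ => hz i), sum_inv_card_mul_eq_of_sum_eq hsum] at amgm
  calc ∏ i, z i = ((∏ i, z i) ^ (Fintype.card ι : ℝ)⁻¹) ^ Fintype.card ι :=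
        (rpow_inv_natCast_pow (prod_nonneg fun i _ => hz i) Fintype.card_ne_zero).symm
    _ ≤ a ^ Fintype.card ι :=
        pow_le_pow_left₀ (rpow_nonneg (prod_nonneg fun i _ => hz i) _) amgm _

theorem prod_eq_pow_card_iff_of_sum_eq (hz : ∀ i, 0 ≤ z i)
    (hsum : ∑ i, z i = Fintype.card ι * a) :
    ∏ i, z i = a ^ Fintype.card ι ↔ ∀ i, z i = a := by
  refine ⟨fun h => ?_, fun h => by simp [h]⟩
  have ha : 0 ≤ a := by
    rw [← sum_inv_card_mul_eq_of_sum_eq hsum]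
    exact sum_nonneg fun i _ => mul_nonneg (by positivity) (hz i)
  have amgm_eq := (geom_mean_eq_arith_mean_weighted_iff_of_pos' univ
    (fun _ => (Fintype.card ι : ℝ)⁻¹) z (fun _ _ => by positivity) sum_inv_card_eq_one
    (fun i _ => hz i)).1
  rw [finsetProd_rpow _ _ (fun i _ => hz i), h, pow_rpow_inv_natCast ha Fintype.card_ne_zero,
    sum_inv_card_mul_eq_of_sum_eq hsum] at amgm_eq
  exact fun i => amgm_eq rfl i (mem_univ i)

end Real

theorem Fintype.sum_midpoint {ι : Type*} [Fintype ι] (x : ι → ℝ) :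
    ∑ p : ι × ι, (x p.1 + x p.2) / 2 = Fintype.card ι * ∑ i, x i := by
  simp [Fintype.sum_prod_type, ← sum_div, sum_add_distrib, ← mul_sum]

section PairProduct

variable {ι M : Type*} [Fintype ι] [LinearOrder ι] [CommMonoid M]

theorem Fintype.prod_filter_gt_comm (f : ι → ι → M) :
    ∏ i, ∏ j with j < i, f i j = ∏ i, ∏ j with i < j, f j i := by
  simp only [prod_filter]
  exact prod_comm

theorem Fintype.prod_eq_prod_filter_lt_mul_mul_prod_filter_gt (g : ι → M) (i : ι) :
    ∏ j, g j = (∏ j with j < i, g j) * (g i * ∏ j with i < j, g j) := by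
  have hge : univ.filter (¬ · < i) = insert i (univ.filter (i < ·)) := by
    ext j
    simp only [mem_filter, mem_univ, true_and, mem_insert, not_lt, le_iff_eq_or_lt, eq_comm]
  rw [← prod_filter_mul_prod_filter_not univ (· < i), hge, prod_insert (by simp)]

theorem Fintype.prod_prod_eq_prod_diag_mul_sq {f : ι → ι → M} (hf : ∀ i j, f i j = f j i) :
    ∏ i, ∏ j, f i j = (∏ i, f i i) * (∏ i, ∏ j with i < j, f i j) ^ 2 := by
  have hswap : ∏ i, ∏ j with i < j, f j i = ∏ i, ∏ j with i < j, f i j :=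
    Finset.prod_congr rfl fun i _ => Finset.prod_congr rfl fun j _ => hf j i
  simp only [fun i => prod_eq_prod_filter_lt_mul_mul_prod_filter_gt (f i) i, prod_mul_distrib,
    prod_filter_gt_comm f, hswap, sq]
  ac_rfl

theorem Fintype.two_pow_card_mul_prod_mul_prod_add_sq {R : Type*} [CommSemiring R] (x : ι → R) :
    2 ^ Fintype.card ι * ((∏ i, x i) * ∏ i, ∏ j with i < j, (x i + x j) ^ 2) =
      ∏ i, ∏ j, (x i + x j) := by
  rw [prod_prod_eq_prod_diag_mul_sq fun i j => add_comm (x i) (x j)]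
  simp only [← two_mul, prod_mul_distrib, prod_const, card_univ, prod_pow]
  ring

theorem Fintype.prod_mul_prod_add_sq_eq_two_pow_mul_prod_midpoint (x : ι → ℝ) :
    (∏ i, x i) * ∏ i, ∏ j with i < j, (x i + x j) ^ 2 =
      2 ^ (Fintype.card ι ^ 2 - Fintype.card ι) * ∏ p : ι × ι, (x p.1 + x p.2) / 2 := by
  have h2 : (2 : ℝ) ^ (card ι ^ 2 - card ι) * 2 ^ card ι = 2 ^ (card ι ^ 2) := by
    rw [← pow_add, Nat.sub_add_cancel (Nat.le_self_pow two_ne_zero _)]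
  rw [prod_div_distrib, prod_const, Fintype.prod_prod_type,
    ← two_pow_card_mul_prod_mul_prod_add_sq, card_univ, Fintype.card_prod, ← sq, ← h2]
  field_simp

end PairProduct

/-- The maximum of `h(λ) = ∏ᵢ λᵢ · ∏_{i<j} (λᵢ+λⱼ)²` over the standard simplex
equals `2^{N²-N} N^{-N²}`, attained exactly at the center `λᵢ = 1/N`. -/
theorem simplex_prod_max (N : ℕ) (hN : 1 ≤ N) (lam : Fin N → ℝ)
    (hpos : ∀ i, 0 ≤ lam i) (hsum : ∑ i, lam i = 1) :
    (∏ i, lam i) * (∏ i, ∏ j ∈ Finset.univ.filter fun j => i < j, (lam i + lam j) ^ 2)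
      ≤ 2 ^ (N ^ 2 - N) * ((N : ℝ) ^ (N ^ 2))⁻¹ ∧
    ((∏ i, lam i) * (∏ i, ∏ j ∈ Finset.univ.filter fun j => i < j, (lam i + lam j) ^ 2)
        = 2 ^ (N ^ 2 - N) * ((N : ℝ) ^ (N ^ 2))⁻¹ ↔ ∀ i, lam i = 1 / N) := by
  have : NeZero N := ⟨by omega⟩
  set z : Fin N × Fin N → ℝ := fun p => (lam p.1 + lam p.2) / 2
  have hz : ∀ p, 0 ≤ z p := fun p => by have := hpos p.1; have := hpos p.2; positivity
  have hcard : Fintype.card (Fin N × Fin N) = N ^ 2 := by simp [sq]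
  have hzsum : ∑ p, z p = Fintype.card (Fin N × Fin N) * (1 / N : ℝ) := by
    rw [Fintype.sum_midpoint, hsum, hcard, Fintype.card_fin]
    push_cast
    field_simp
  have hbound : ((N : ℝ) ^ (N ^ 2))⁻¹ = (1 / N : ℝ) ^ Fintype.card (Fin N × Fin N) := by
    rw [hcard, one_div, inv_pow]
  rw [Fintype.prod_mul_prod_add_sq_eq_two_pow_mul_prod_midpoint, Fintype.card_fin, hbound]
  refine ⟨mul_le_mul_of_nonneg_left (Real.prod_le_pow_card_of_sum_eq hz hzsum) (by positivity), ?_⟩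
  rw [mul_right_inj' (by positivity), Real.prod_eq_pow_card_iff_of_sum_eq hz hzsum]
  exact ⟨fun h i => by simpa [z] using h (i, i), fun h p => by simp [z, h]⟩
end

section
/- With σ_d = π^{d/2} / Γ(1 + d/2) denoting the volume of the d-dimensional Euclidean unit ball, one has lim_{N→∞} ( (2^{1−N²} · π^{N²/2} / Γ(N²/2)) / σ_{N²−1} )^{1/(N²−1)} = 1/2. Equivalently, the Bures volume radius of the set of N×N density matrices, whose Bures volume equals 2^{1−N²} π^{N²/2} / Γ(N²/2), tends to 1/2 as N → ∞. -/
/-!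
With `n = N²`, the quotient inside the root equals `2^{-(n-1)} · √π · Γ(n/2 + 1/2) / Γ(n/2)`.
Log-convexity of `Γ` gives Gautschi's bounds `√(x - 1/2) ≤ Γ(x + 1/2) / Γ(x) ≤ √x`, so the
factor after `2^{-(n-1)}` grows only like `√n`, and its `(n-1)`-th root tends to `1`.
-/

open Filter Topology Real

theorem Real.Gamma_add_half_le_sqrt_mul_Gamma {x : ℝ} (hx : 0 < x) :
    Gamma (x + 1 / 2) ≤ √x * Gamma x := by
  have hΓ := Gamma_pos_of_pos hx
  have h := Gamma_mul_add_mul_le_rpow_Gamma_mul_rpow_Gamma hx (by linarith : 0 < x + 1)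
    one_half_pos one_half_pos (add_halves 1)
  rw [Gamma_add_one hx.ne', ← sqrt_eq_rpow, ← sqrt_eq_rpow, ← sqrt_mul hΓ.le,
    show 1 / 2 * x + 1 / 2 * (x + 1) = x + 1 / 2 by ring] at h
  rwa [show Gamma x * (x * Gamma x) = x * Gamma x ^ 2 by ring, sqrt_mul hx.le,
    sqrt_sq hΓ.le] at h

theorem Real.sqrt_sub_half_mul_Gamma_le_Gamma_add_half {x : ℝ} (hx : 1 / 2 < x) :
    √(x - 1 / 2) * Gamma x ≤ Gamma (x + 1 / 2) := by
  have hy : 0 < x - 1 / 2 := by linarith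
  have hΓ := Gamma_pos_of_pos hy
  have h := Gamma_mul_add_mul_le_rpow_Gamma_mul_rpow_Gamma hy (by linarith : 0 < x + 1 / 2)
    one_half_pos one_half_pos (add_halves 1)
  have hrec : Gamma (x + 1 / 2) = (x - 1 / 2) * Gamma (x - 1 / 2) := by
    rw [← Gamma_add_one hy.ne']; ring_nf
  rw [← sqrt_eq_rpow, ← sqrt_eq_rpow, ← sqrt_mul hΓ.le,
    show 1 / 2 * (x - 1 / 2) + 1 / 2 * (x + 1 / 2) = x by ring] at h
  calc √(x - 1 / 2) * Gamma x
      ≤ √(x - 1 / 2) * √(Gamma (x - 1 / 2) * Gamma (x + 1 / 2)) := by gcongr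
    _ = Gamma (x + 1 / 2) := by
      rw [← sqrt_mul hy.le, hrec, ← mul_assoc, sqrt_mul_self (by positivity)]

theorem tendsto_sqrt_const_mul_rpow_one_div {k : ℝ} (hk : 0 < k) :
    Tendsto (fun t : ℝ => √(k * t) ^ (1 / t)) atTop (𝓝 1) := by
  have hconst : Tendsto (fun t : ℝ => k ^ (1 / t)) atTop (𝓝 1) := by
    simpa using tendsto_const_nhds.rpow
      ((tendsto_const_nhds (x := (1 : ℝ))).div_atTop tendsto_id) (Or.inl hk.ne')
  have hprod := (hconst.mul tendsto_rpow_div).sqrt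
  rw [mul_one, sqrt_one] at hprod
  refine hprod.congr' ?_
  filter_upwards [eventually_gt_atTop 0] with t ht
  rw [← mul_rpow hk.le ht.le, sqrt_eq_rpow, sqrt_eq_rpow, ← rpow_mul (by positivity),
    ← rpow_mul (by positivity), mul_comm (1 / t)]

theorem tendsto_sqrt_pi_mul_Gamma_add_half_div_Gamma_rpow :
    Tendsto (fun n : ℝ => (√π * Gamma (n / 2 + 1 / 2) / Gamma (n / 2)) ^ (1 / (n - 1)))
      atTop (𝓝 1) := by
  have hshift : Tendsto (fun n : ℝ => n - 1) atTop atTop :=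
    tendsto_atTop_atTop.2 fun b => ⟨b + 1, fun n hn => by linarith⟩
  refine tendsto_of_tendsto_of_tendsto_of_le_of_le'
    ((tendsto_sqrt_const_mul_rpow_one_div (half_pos pi_pos)).comp hshift)
    ((tendsto_sqrt_const_mul_rpow_one_div pi_pos).comp hshift) ?_ ?_ <;>
  filter_upwards [eventually_ge_atTop 2] with n hn <;>
  have hΓ : 0 < Gamma (n / 2) := Gamma_pos_of_pos (by linarith) <;>
  refine rpow_le_rpow (by positivity) ?_ (one_div_nonneg.2 (by linarith))
  · rw [le_div_iff₀ hΓ, show π / 2 * (n - 1) = π * (n / 2 - 1 / 2) by ring, sqrt_mul pi_pos.le,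
      mul_assoc]
    gcongr
    exact sqrt_sub_half_mul_Gamma_le_Gamma_add_half (by linarith)
  · calc √π * Gamma (n / 2 + 1 / 2) / Gamma (n / 2) ≤ √π * √(n / 2) := by
          rw [div_le_iff₀ hΓ, mul_assoc]
          gcongr
          exact Gamma_add_half_le_sqrt_mul_Gamma (by linarith)
      _ ≤ √(π * (n - 1)) := by
          rw [sqrt_mul pi_pos.le]
          gcongr
          linarith

theorem bures_volume_ratio_eq (n : ℝ) :
    2 ^ (1 - n) * π ^ (n / 2) / Gamma (n / 2) / (π ^ ((n - 1) / 2) / Gamma (1 + (n - 1) / 2)) =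
      2⁻¹ ^ (n - 1) * (√π * Gamma (n / 2 + 1 / 2) / Gamma (n / 2)) := by
  have h2 : (2 : ℝ) ^ (1 - n) = 2⁻¹ ^ (n - 1) := by
    rw [inv_rpow zero_le_two, ← rpow_neg zero_le_two, neg_sub]
  have hπ : π ^ (n / 2) = √π * π ^ ((n - 1) / 2) := by
    rw [sqrt_eq_rpow, ← rpow_add pi_pos]; ring_nf
  rw [h2, hπ, show 1 + (n - 1) / 2 = n / 2 + 1 / 2 by ring]
  have : π ^ ((n - 1) / 2) ≠ 0 := (rpow_pos_of_pos pi_pos _).ne'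
  field_simp

theorem bures_volume_radius_eq {n : ℝ} (hn : 1 < n) :
    (2 ^ (1 - n) * π ^ (n / 2) / Gamma (n / 2) / (π ^ ((n - 1) / 2) / Gamma (1 + (n - 1) / 2))) ^
        (1 / (n - 1)) =
      1 / 2 * (√π * Gamma (n / 2 + 1 / 2) / Gamma (n / 2)) ^ (1 / (n - 1)) := by
  have hΓ : 0 < Gamma (n / 2) := Gamma_pos_of_pos (by linarith)
  rw [bures_volume_ratio_eq, mul_rpow (by positivity) (by positivity), one_div, one_div,
    rpow_rpow_inv (by norm_num) (by linarith)]

/-- The Bures volume radius of `D_N` tends to `1/2`: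
`((2^{1-N²} π^{N²/2} / Γ(N²/2)) / σ_{N²-1})^{1/(N²-1)} → 1/2`, where
`σ_d = π^{d/2}/Γ(1 + d/2)` is the volume of the `d`-dimensional Euclidean unit ball. -/
theorem bures_vrad_tendsto_half :
    Tendsto (fun N : ℕ =>
        (((2 : ℝ) ^ ((1 : ℝ) - (N : ℝ) ^ 2) * Real.pi ^ ((N : ℝ) ^ 2 / 2) /
              Real.Gamma ((N : ℝ) ^ 2 / 2)) /
            (Real.pi ^ (((N : ℝ) ^ 2 - 1) / 2) / Real.Gamma (1 + ((N : ℝ) ^ 2 - 1) / 2))) ^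
          (1 / ((N : ℝ) ^ 2 - 1)))
      atTop (nhds (1 / 2)) := by
  have hsq : Tendsto (fun N : ℕ => (N : ℝ) ^ 2) atTop atTop :=
    (tendsto_pow_atTop two_ne_zero).comp tendsto_natCast_atTop_atTop
  have hlim := (tendsto_sqrt_pi_mul_Gamma_add_half_div_Gamma_rpow.const_mul (1 / 2)).comp hsq
  rw [mul_one] at hlim
  refine hlim.congr' ?_
  filter_upwards [eventually_ge_atTop 2] with N hN
  have hN : (1 : ℝ) < (N : ℝ) ^ 2 := by
    have : (2 : ℝ) ≤ N := by exact_mod_cast hN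
    nlinarith
  exact (bures_volume_radius_eq hN).symm
end

section
/- One has lim_{N→∞} (N²−1)^{3/4} · ( (2π)^{N(N−1)/2} · √N · E(N) / Γ(N²) )^{1/(N²−1)} = (4π²e)^{1/4}, where E(N) = ∏_{j=1}^N Γ(j). Equivalently, the total Hilbert–Schmidt volume V_HS(D_N) = (2π)^{N(N−1)/2} √N E(N)/Γ(N²) of the set of N×N density matrices satisfies (V_HS(D_N))^{1/d} ∼ (4π²e)^{1/4} d^{−3/4} with d = N²−1. -/
/-!
Taking logarithms, `log V_N = (N²/2) log 2π + ∑_{j<N} log j! - log (N²)! + O(N)`.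
Stirling's formula `log n! = n log n - n + o(n)`, the summation by parts
`∑_{j<N} log j! = N log N! - ∑_{k≤N} k log k`, and the comparison of `∑_{k≤N} k log k` with
`∫ x log x = x²/2 log x - x²/4` give `log V_N = N² (½ log 2π + ¼ - ¾ log N²) + o(N²)`.
Dividing by `d = N² - 1` and adding `¾ log d`, the logarithmic terms cancel up to `o(1)`,
leaving `½ log 2π + ¼ = ¼ log (4π²e)`.
-/

open Filter Real Asymptotics Topology Finset
open scoped Nat

lemma isLittleO_natCast_sq : (fun N : ℕ => (N : ℝ)) =o[atTop] fun N => (N : ℝ) ^ 2 := by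
  have := (isLittleO_pow_pow_atTop_of_lt (𝕜 := ℝ) one_lt_two).comp_tendsto
    tendsto_natCast_atTop_atTop
  simp only [pow_one, Function.comp_def] at this
  exact this

lemma isLittleO_const_natCast (c : ℝ) : (fun _ : ℕ => c) =o[atTop] fun n => (n : ℝ) :=
  (isLittleO_const_id_atTop c).comp_tendsto tendsto_natCast_atTop_atTop

lemma isLittleO_log_natCast : (fun n : ℕ => log n) =o[atTop] fun n => (n : ℝ) :=
  isLittleO_log_id_atTop.comp_tendsto tendsto_natCast_atTop_atTop

lemma isLittleO_natCast_mul_log :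
    (fun N : ℕ => (N : ℝ) * log N) =o[atTop] fun N => (N : ℝ) ^ 2 := by
  simpa only [sq] using
    (isBigO_refl (fun N : ℕ => (N : ℝ)) atTop).mul_isLittleO isLittleO_log_natCast

lemma log_factorial_sub_eq (n : ℕ) :
    log n ! - (n * log n - n) = log (2 * n) / 2 + log (Stirling.stirlingSeq n) := by
  rcases eq_or_ne n 0 with rfl | hn
  · simp
  rw [Stirling.log_stirlingSeq_formula, log_div (by positivity) (exp_pos 1).ne', log_exp]
  ring

lemma isLittleO_log_factorial_sub :
    (fun n : ℕ => log n ! - (n * log n - n)) =o[atTop] fun n => (n : ℝ) := by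
  have hseq : (fun n => log (Stirling.stirlingSeq n)) =O[atTop] fun _ => (1 : ℝ) :=
    ((continuousAt_log (by positivity)).tendsto.comp
      Stirling.tendsto_stirlingSeq_sqrt_pi).isBigO_one ℝ
  have hlog : (fun n : ℕ => log (2 * n) / 2) =o[atTop] fun n => (n : ℝ) := by
    refine (((isLittleO_const_natCast (log 2)).add isLittleO_log_natCast).const_mul_left
      (1 / 2)).congr' ?_ EventuallyEq.rfl
    filter_upwards [eventually_ne_atTop 0] with n hn
    rw [log_mul two_ne_zero (by positivity)]
    ring
  simp_rw [log_factorial_sub_eq]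
  exact hlog.add (hseq.trans_isLittleO (isLittleO_const_natCast 1))

lemma MonotoneOn.mul_sub_le_sub_le_of_hasDerivAt {f F : ℝ → ℝ} {a b : ℝ} (hab : a < b)
    (hf : MonotoneOn f (Set.Icc a b)) (hF : ∀ x ∈ Set.Icc a b, HasDerivAt F (f x) x) :
    f a * (b - a) ≤ F b - F a ∧ F b - F a ≤ f b * (b - a) := by
  obtain ⟨c, hc, hslope⟩ := exists_hasDerivAt_eq_slope F f hab
    (fun x hx => (hF x hx).continuousAt.continuousWithinAt)
    (fun x hx => hF x (Set.Ioo_subset_Icc_self hx))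
  have hc' := Set.Ioo_subset_Icc_self hc
  rw [eq_div_iff (sub_pos.2 hab).ne'] at hslope
  rw [← hslope]
  exact ⟨by gcongr; exact hf (Set.left_mem_Icc.2 hab.le) hc' hc.1.le,
    by gcongr; exact hf hc' (Set.right_mem_Icc.2 hab.le) hc.2.le⟩

noncomputable def primitiveMulLog (x : ℝ) : ℝ := x ^ 2 / 2 * log x - x ^ 2 / 4

lemma hasDerivAt_primitiveMulLog {x : ℝ} (hx : x ≠ 0) :
    HasDerivAt primitiveMulLog (x * log x) x := by
  have := (((hasDerivAt_pow 2 x).div_const 2).mul (hasDerivAt_log hx)).sub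
    ((hasDerivAt_pow 2 x).div_const 4)
  refine this.congr_deriv ?_
  field_simp
  ring

lemma mul_log_le_primitiveMulLog_sub {x : ℝ} (hx : 1 ≤ x) :
    x * log x ≤ primitiveMulLog (x + 1) - primitiveMulLog x ∧
      primitiveMulLog (x + 1) - primitiveMulLog x ≤ (x + 1) * log (x + 1) := by
  have hmono : MonotoneOn (fun y => y * log y) (Set.Icc x (x + 1)) :=
    mul_log_strictMonoOn.monotoneOn.mono fun y hy =>
      (exp_le_one_iff.2 (by norm_num)).trans (hx.trans hy.1)
  simpa using hmono.mul_sub_le_sub_le_of_hasDerivAt (lt_add_one x) fun y hy =>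
    hasDerivAt_primitiveMulLog (by linarith [hy.1])

lemma sum_mul_log_le_primitiveMulLog (N : ℕ) :
    ∑ k ∈ range (N + 1), (k : ℝ) * log k ≤ primitiveMulLog (N + 1) + 1 / 4 ∧
      primitiveMulLog (N + 1) + 1 / 4 ≤ ∑ k ∈ range (N + 1 + 1), (k : ℝ) * log k := by
  induction N with
  | zero => simp [primitiveMulLog, sum_range_succ]
  | succ n ih =>
    obtain ⟨hlow, hupp⟩ := mul_log_le_primitiveMulLog_sub (x := (n : ℝ) + 1) (by simp)
    simp only [sum_range_succ _ (n + 1 + 1), sum_range_succ _ (n + 1)] at ih ⊢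
    push_cast at *
    constructor <;> linarith [ih.1, ih.2]

lemma isLittleO_sum_mul_log_sub_primitiveMulLog :
    (fun N : ℕ => ∑ k ∈ range (N + 1), (k : ℝ) * log k - primitiveMulLog N)
      =o[atTop] fun N => (N : ℝ) ^ 2 := by
  have hbound : (fun N : ℕ => ∑ k ∈ range (N + 1), (k : ℝ) * log k - primitiveMulLog N - 1 / 4)
      =O[atTop] fun N => (N : ℝ) * log N := by
    refine IsBigO.of_bound 1 ?_
    filter_upwards [eventually_ne_atTop 0] with N hN
    obtain ⟨M, rfl⟩ := Nat.exists_eq_succ_of_ne_zero hN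
    obtain ⟨hlow, hupp⟩ := sum_mul_log_le_primitiveMulLog M
    have hlog : 0 ≤ log ((M : ℝ) + 1) := log_nonneg (by simp)
    simp only [sum_range_succ _ (M + 1)] at hupp ⊢
    push_cast at *
    rw [one_mul, norm_of_nonneg (by linarith), norm_of_nonneg (by positivity)]
    linarith
  refine (hbound.trans_isLittleO isLittleO_natCast_mul_log).add
    ((isLittleO_const_natCast (1 / 4)).trans isLittleO_natCast_sq) |>.congr_left fun N => ?_
  ring

lemma sum_log_factorial_eq (N : ℕ) :
    ∑ j ∈ range N, log (j ! : ℝ) = N * log (N ! : ℝ) - ∑ k ∈ range (N + 1), (k : ℝ) * log k := by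
  induction N with
  | zero => simp
  | succ n ih =>
    rw [sum_range_succ, ih, sum_range_succ _ (n + 1), Nat.factorial_succ, Nat.cast_mul,
      log_mul (by positivity) (by positivity)]
    push_cast
    ring

lemma isLittleO_sum_log_factorial_sub :
    (fun N : ℕ => ∑ j ∈ range N, log (j ! : ℝ) - (N ^ 2 / 2 * log N - 3 / 4 * N ^ 2))
      =o[atTop] fun N => (N : ℝ) ^ 2 := by
  have hmul := (isBigO_refl (fun N : ℕ => (N : ℝ)) atTop).mul_isLittleO isLittleO_log_factorial_sub
  simp only [← sq] at hmul
  refine (hmul.sub isLittleO_sum_mul_log_sub_primitiveMulLog).congr_left fun N => ?_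
  rw [sum_log_factorial_eq, primitiveMulLog]
  ring

noncomputable def hsVolume (N : ℕ) : ℝ :=
  (2 * π) ^ ((N : ℝ) * ((N : ℝ) - 1) / 2) * √N *
    (∏ j ∈ range N, Gamma ((j : ℝ) + 1)) / Gamma ((N : ℝ) ^ 2)

lemma hsVolume_pos {N : ℕ} (hN : N ≠ 0) : 0 < hsVolume N := by
  unfold hsVolume
  have : (0 : ℝ) < N := by positivity
  positivity

lemma log_hsVolume {N : ℕ} (hN : N ≠ 0) :
    log (hsVolume N) = N * (N - 1) / 2 * log (2 * π) + log N / 2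
      + ∑ j ∈ range N, log (j ! : ℝ) - log ((N ^ 2) ! : ℝ) + 2 * log N := by
  have hN' : (N : ℝ) ≠ 0 := by positivity
  have hGamma : Gamma ((N : ℝ) ^ 2) = ((N ^ 2) ! : ℝ) / (N : ℝ) ^ 2 := by
    rw [eq_div_iff (by positivity), mul_comm, ← Gamma_add_one (by positivity)]
    exact_mod_cast Gamma_nat_eq_factorial (N ^ 2)
  simp only [hsVolume, Gamma_nat_eq_factorial, hGamma]
  rw [log_div (by positivity) (by positivity), log_mul (by positivity) (by positivity),
    log_mul (by positivity) (by positivity), log_rpow (by positivity), log_sqrt (by positivity),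
    log_prod (fun j _ => by positivity), log_div (by positivity) (by positivity), log_pow]
  push_cast
  ring

lemma isLittleO_log_hsVolume_sub :
    (fun N : ℕ => log (hsVolume N) - N ^ 2 * (log (2 * π) / 2 + 1 / 4 - 3 / 4 * log (N ^ 2)))
      =o[atTop] fun N => (N : ℝ) ^ 2 := by
  have hstirling := isLittleO_log_factorial_sub.comp_tendsto (tendsto_pow_atTop two_ne_zero)
  simp only [Function.comp_def, Nat.cast_pow] at hstirling
  have hlower : (fun N : ℕ => 5 / 2 * log N - log (2 * π) / 2 * N) =o[atTop]
      fun N => (N : ℝ) ^ 2 :=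
    ((isLittleO_log_natCast.const_mul_left _).trans isLittleO_natCast_sq).sub
      (((isBigO_refl _ atTop).const_mul_left _).trans_isLittleO isLittleO_natCast_sq)
  refine ((isLittleO_sum_log_factorial_sub.sub hstirling).add hlower).congr' ?_ EventuallyEq.rfl
  filter_upwards [eventually_ne_atTop 0] with N hN
  rw [log_hsVolume hN, log_pow]
  push_cast
  ring

lemma tendsto_mul_log_sub_one_add_div (a c : ℝ) :
    Tendsto (fun x : ℝ => a * log (x - 1) + x * (c - a * log x) / (x - 1)) atTop (𝓝 c) := by
  have hlog := tendsto_log_comp_add_sub_log (-1)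
  have hinv := tendsto_pow_log_div_mul_add_atTop 1 (-1) 0 one_ne_zero
  have hlogdiv := tendsto_pow_log_div_mul_add_atTop 1 (-1) 1 one_ne_zero
  have := (((hlog.const_mul a).add (hinv.const_mul c)).sub (hlogdiv.const_mul a)).const_add c
  rw [mul_zero, mul_zero, add_zero, sub_zero, add_zero] at this
  refine this.congr' ?_
  filter_upwards [eventually_gt_atTop 1] with x hx
  have : x - 1 ≠ 0 := by linarith
  simp only [pow_zero, pow_one, one_mul, ← sub_eq_add_neg]
  field_simp
  ring

lemma isBigO_sq_sq_sub_one : (fun N : ℕ => (N : ℝ) ^ 2) =O[atTop] fun N => (N : ℝ) ^ 2 - 1 := by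
  refine IsBigO.of_bound 2 ?_
  filter_upwards [eventually_ge_atTop 2] with N hN
  have hN' : (2 : ℝ) ≤ N := by exact_mod_cast hN
  rw [norm_of_nonneg (by positivity), norm_of_nonneg (by nlinarith)]
  nlinarith

/-- `(V_HS(D_N))^{1/d} ∼ (4π²e)^{1/4} d^{-3/4}` with `d = N² - 1`, i.e.
`(N²-1)^{3/4} · ((2π)^{N(N-1)/2} √N E(N)/Γ(N²))^{1/(N²-1)} → (4π²e)^{1/4}`,
where `E(N) = ∏_{j=1}^N Γ(j)`. -/
theorem hs_volume_asymptotics :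
    Tendsto (fun N : ℕ =>
        ((N : ℝ) ^ 2 - 1) ^ ((3 : ℝ) / 4) *
          ((2 * Real.pi) ^ ((N : ℝ) * ((N : ℝ) - 1) / 2) * Real.sqrt N *
              (∏ j ∈ Finset.range N, Real.Gamma ((j : ℝ) + 1)) / Real.Gamma ((N : ℝ) ^ 2)) ^
            (1 / ((N : ℝ) ^ 2 - 1)))
      atTop (nhds ((4 * Real.pi ^ 2 * Real.exp 1) ^ ((1 : ℝ) / 4))) := by
  have hc : (4 * π ^ 2 * exp 1) ^ ((1 : ℝ) / 4) = exp (log (2 * π) / 2 + 1 / 4) := by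
    rw [rpow_def_of_pos (by positivity), log_mul (by positivity) (exp_pos 1).ne',
      log_mul (by positivity) (by positivity), log_exp, log_pow, log_mul two_ne_zero pi_ne_zero,
      show (4 : ℝ) = 2 ^ 2 by norm_num, log_pow]
    push_cast
    ring_nf
  have hmain := (tendsto_mul_log_sub_one_add_div (3 / 4) (log (2 * π) / 2 + 1 / 4)).comp
    ((tendsto_pow_atTop two_ne_zero).comp tendsto_natCast_atTop_atTop)
  have hrest := (isLittleO_log_hsVolume_sub.trans_isBigO isBigO_sq_sq_sub_one).tendsto_div_nhds_zero
  rw [hc]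
  refine ((continuous_exp.tendsto _).comp (by simpa using hmain.add hrest)).congr' ?_
  filter_upwards [eventually_ge_atTop 2] with N hN
  have hN' : (2 : ℝ) ≤ N := by exact_mod_cast hN
  have hpos : (0 : ℝ) < N ^ 2 - 1 := by nlinarith
  change _ = ((N : ℝ) ^ 2 - 1) ^ ((3 : ℝ) / 4) * hsVolume N ^ (1 / ((N : ℝ) ^ 2 - 1))
  rw [rpow_def_of_pos hpos, rpow_def_of_pos (hsVolume_pos (by omega)), ← exp_add]
  simp only [Function.comp_apply]
  congr 1
  field_simp
  ring
end
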